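/- Let |Ψ⟩ = 2^{-n/2} Σ e^{iβ_x} |x⟩ (x ∈ {0,1}^n, β_x ∈ ℝ) be a locally maximally entanglable (LME) state written as |Ψ⟩ = U|+⟩^{⊗n} with U diagonal unitary. Then the operators S_k = U σ₁^{(k)} U† (k = 1,…,n) are Hermitian, unitary, pairwise commuting, and satisfy S_k σ₃^{i}|Ψ⟩ = (-1)^{i_k} σ₃^{i}|Ψ⟩ for all i ∈ {0,1}^n, where σ₃^{i} = σ₃^{i₁}⊗…⊗σ₃^{iₙ}. In particular { σ₃^{i}|Ψ⟩ : i ∈ {0,1}^n } is an orthonormal basis of (ℂ²)^{⊗n}. -/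

import Mathlib

open Matrix Complex

noncomputable section

def σ : Fin 4 → Matrix (Fin 2) (Fin 2) ℂ
  | 0 => 1
  | 1 => !![0, 1; 1, 0]
  | 2 => !![0, -Complex.I; Complex.I, 0]
  | 3 => !![1, 0; 0, -1]

def pauliString (n : ℕ) (j : Fin n → Fin 4) :
    Matrix (Fin n → Fin 2) (Fin n → Fin 2) ℂ :=
  Matrix.of fun x y => ∏ i, σ (j i) (x i) (y i)

/-- `σ₁^{(k)}`: `σ₁` on tensor factor `k`, identity elsewhere. -/
def sigma1At (n : ℕ) (k : Fin n) : Matrix (Fin n → Fin 2) (Fin n → Fin 2) ℂ :=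
  pauliString n fun i => if i = k then 1 else 0

/-- `σ₃^{i} = σ₃^{i₁}⊗…⊗σ₃^{iₙ}` for a bitstring `i`. -/
def sigma3Str (n : ℕ) (i : Fin n → Fin 2) : Matrix (Fin n → Fin 2) (Fin n → Fin 2) ℂ :=
  pauliString n fun k => if i k = 1 then 3 else 0

/-- `|+⟩^{⊗n}`. -/
def plusN (n : ℕ) : (Fin n → Fin 2) → ℂ := fun _ => (Real.sqrt 2 : ℂ)⁻¹ ^ n


/-! σ₁^{(k)} is the permutation matrix of the bit flip `x ↦ x + e_k` and σ₃^{i} is the diagonal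
matrix of the Walsh character `x ↦ (-1)^{i·x}`, so σ₁^{(k)} maps σ₃^{i}|+⟩^{⊗n} to
`(-1)^{i_k}` times itself. The diagonal unitary `U` commutes with σ₃^{i}, and conjugating by it
carries these eigenvector equations over to `S_k` and σ₃^{i}|Ψ⟩. The σ₃^{i}|Ψ⟩ are unit vectors,
being images of |+⟩^{⊗n} under unitaries; for `i ≠ j` pick `k` with `i_k ≠ j_k`: then σ₃^{i}|Ψ⟩
and σ₃^{j}|Ψ⟩ are eigenvectors of the Hermitian `S_k` for the distinct eigenvalues `±1`, hence
orthogonal. Being `2ⁿ` orthonormal vectors, they span. -/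

namespace Matrix

variable {ι m α : Type*} [Fintype ι]

theorem IsHermitian.star_dotProduct_eq_zero_of_mulVec_eq_smul [Field α] [StarRing α]
    {A : Matrix ι ι α} (hA : A.IsHermitian) {v w : ι → α} {a b : α} (ha : star a = a)
    (hab : a ≠ b) (hv : A *ᵥ v = a • v) (hw : A *ᵥ w = b • w) : star v ⬝ᵥ w = 0 := by
  have h : a * (star v ⬝ᵥ w) = b * (star v ⬝ᵥ w) :=
    calc a * (star v ⬝ᵥ w) = star (A *ᵥ v) ⬝ᵥ w := by
          rw [hv, star_smul, ha, smul_dotProduct, smul_eq_mul]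
      _ = star v ⬝ᵥ (A *ᵥ w) := by rw [star_mulVec, hA.eq, dotProduct_mulVec]
      _ = b * (star v ⬝ᵥ w) := by rw [hw, dotProduct_smul, smul_eq_mul]
  by_contra hvw
  exact hab (mul_right_cancel₀ hvw h)

section Isometry

variable [Fintype m] [DecidableEq ι] [CommSemiring α] [StarRing α] {U : Matrix m ι α}

theorem star_mulVec_dotProduct_mulVec (hU : Uᴴ * U = 1) (v w : ι → α) :
    star (U *ᵥ v) ⬝ᵥ (U *ᵥ w) = star v ⬝ᵥ w := by
  rw [star_mulVec, ← dotProduct_mulVec, mulVec_mulVec, hU, one_mulVec]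

theorem mul_mul_conjTranspose_mul_mul_mul_conjTranspose (hU : Uᴴ * U = 1) (A B : Matrix ι ι α) :
    (U * A * Uᴴ) * (U * B * Uᴴ) = U * (A * B) * Uᴴ := by
  simp only [Matrix.mul_assoc]
  rw [← Matrix.mul_assoc Uᴴ, hU, Matrix.one_mul]

theorem mul_mul_conjTranspose_mulVec_mulVec (hU : Uᴴ * U = 1) {A : Matrix ι ι α} {v : ι → α} {a : α}
    (hv : A *ᵥ v = a • v) : (U * A * Uᴴ) *ᵥ (U *ᵥ v) = a • (U *ᵥ v) := by
  rw [mulVec_mulVec, Matrix.mul_assoc, Matrix.mul_assoc, hU, Matrix.mul_one, ← mulVec_mulVec,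
    hv, mulVec_smul]

end Isometry

theorem permMatrix_mem_unitaryGroup [DecidableEq ι] [CommRing α] [StarRing α]
    (σ : Equiv.Perm ι) : σ.permMatrix α ∈ unitaryGroup ι α := by
  rw [mem_unitaryGroup_iff, star_eq_conjTranspose, conjTranspose_permMatrix, ← permMatrix_mul,
    inv_mul_cancel, permMatrix_one]

theorem diagonal_mem_unitaryGroup [DecidableEq ι] [CommRing α] [StarRing α] {d : ι → α}
    (hd : ∀ i, star (d i) * d i = 1) : diagonal d ∈ unitaryGroup ι α := by
  rw [mem_unitaryGroup_iff', star_eq_conjTranspose, diagonal_conjTranspose, diagonal_mul_diagonal,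
    ← diagonal_one]
  exact congrArg diagonal (funext hd)

end Matrix

theorem orthonormal_of_isHermitian_of_mulVec_eq_smul {ι κ I : Type*} [Fintype ι]
    {S : κ → Matrix ι ι ℂ} (hS : ∀ k, (S k).IsHermitian) {v : I → ι → ℂ} {μ : κ → I → ℂ}
    (hμ : ∀ k i, star (μ k i) = μ k i) (hsep : ∀ i j, i ≠ j → ∃ k, μ k i ≠ μ k j)
    (hv : ∀ k i, S k *ᵥ v i = μ k i • v i) (hnorm : ∀ i, star (v i) ⬝ᵥ v i = 1) :
    Orthonormal ℂ fun i => WithLp.toLp 2 (v i) := by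
  classical
  rw [orthonormal_iff_ite]
  intro i j
  rw [EuclideanSpace.inner_toLp_toLp, dotProduct_comm]
  split_ifs with hij
  · exact hij ▸ hnorm i
  · obtain ⟨k, hk⟩ := hsep i j hij
    exact IsHermitian.star_dotProduct_eq_zero_of_mulVec_eq_smul (hS k) (hμ k i) hk (hv k i) (hv k j)

namespace LMEState

variable {n : ℕ}

lemma σ_zero_apply (a b : Fin 2) : σ 0 a b = if a = b then 1 else 0 := by
  fin_cases a <;> fin_cases b <;> simp [σ]

lemma σ_one_apply (a b : Fin 2) : σ 1 a b = if a + 1 = b then 1 else 0 := by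
  fin_cases a <;> fin_cases b <;> simp [σ]

lemma σ_three_apply (a b : Fin 2) : σ 3 a b = if a = b then (-1) ^ (a : ℕ) else 0 := by
  fin_cases a <;> fin_cases b <;> simp [σ]

abbrev bitFlip (k : Fin n) : Equiv.Perm (Fin n → Fin 2) := Equiv.addRight (Pi.single k 1)

lemma bitFlip_inv (k : Fin n) : (bitFlip k)⁻¹ = bitFlip k := by
  rw [Equiv.Perm.inv_def, Equiv.addRight_symm, ← Pi.single_neg]
  rfl

lemma bitFlip_mul_comm (k k' : Fin n) : bitFlip k * bitFlip k' = bitFlip k' * bitFlip k := by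
  ext x i
  simp [add_right_comm]

lemma sigma1At_eq_permMatrix (k : Fin n) : sigma1At n k = (bitFlip k).permMatrix ℂ := by
  ext x y
  have factor : ∀ i, σ (if i = k then 1 else 0) (x i) (y i) =
      if (x + Pi.single k 1 : Fin n → Fin 2) i = y i then 1 else 0 := by
    intro i
    by_cases hi : i = k
    · subst hi; simp [σ_one_apply]
    · simp [hi, σ_zero_apply]
  simp only [sigma1At, pauliString, of_apply, factor, Fintype.prod_boole, ← funext_iff,
    PEquiv.toMatrix_apply, Equiv.toPEquiv_apply, Option.mem_def, Option.some_inj]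
  rfl

def walsh (i x : Fin n → Fin 2) : ℂ := ∏ k, (-1) ^ ((i k : ℕ) * (x k : ℕ))

lemma sigma3Str_eq_diagonal (i : Fin n → Fin 2) : sigma3Str n i = diagonal (walsh i) := by
  ext x y
  have factor : ∀ k, σ (if i k = 1 then 3 else 0) (x k) (y k) =
      if x k = y k then (-1) ^ ((i k : ℕ) * (x k : ℕ)) else 0 := by
    intro k
    by_cases hk : i k = 1
    · simp [hk, σ_three_apply]
    · have hk0 : i k = 0 := by omega
      simp [hk0, σ_zero_apply]
  simp only [sigma3Str, pauliString, of_apply, factor, Fintype.prod_ite_zero, ← funext_iff,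
    diagonal_apply, walsh]

lemma walsh_add_single (i x : Fin n → Fin 2) (k : Fin n) :
    walsh i (x + Pi.single k 1) = (-1) ^ (i k : ℕ) * walsh i x := by
  have factor : ∀ a b c : Fin 2, (-1 : ℂ) ^ ((a : ℕ) * ((b + c : Fin 2) : ℕ)) =
      (-1) ^ ((a : ℕ) * (c : ℕ)) * (-1) ^ ((a : ℕ) * (b : ℕ)) := by
    intro a b c; fin_cases a <;> fin_cases b <;> fin_cases c <;> simp
  simp only [walsh, Pi.add_apply, factor, Finset.prod_mul_distrib]
  congr 1
  rw [Fintype.prod_eq_single k (fun l hl => by simp [hl])]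
  simp

lemma star_walsh_mul_walsh (i x : Fin n → Fin 2) : star (walsh i x) * walsh i x = 1 := by
  simp [walsh, ← Finset.prod_mul_distrib, ← pow_add]

lemma sigma1At_isHermitian (k : Fin n) : (sigma1At n k).IsHermitian := by
  rw [IsHermitian, sigma1At_eq_permMatrix, conjTranspose_permMatrix, bitFlip_inv]

lemma sigma1At_mem_unitaryGroup (k : Fin n) :
    sigma1At n k ∈ unitaryGroup (Fin n → Fin 2) ℂ :=
  sigma1At_eq_permMatrix k ▸ permMatrix_mem_unitaryGroup _

lemma sigma1At_mul_comm (k k' : Fin n) :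
    sigma1At n k * sigma1At n k' = sigma1At n k' * sigma1At n k := by
  simp only [sigma1At_eq_permMatrix, ← permMatrix_mul, bitFlip_mul_comm]

lemma sigma3Str_mem_unitaryGroup (i : Fin n → Fin 2) :
    sigma3Str n i ∈ unitaryGroup (Fin n → Fin 2) ℂ :=
  sigma3Str_eq_diagonal i ▸ diagonal_mem_unitaryGroup (star_walsh_mul_walsh i)

lemma sigma3Str_mul_comm_of_isDiag {U : Matrix (Fin n → Fin 2) (Fin n → Fin 2) ℂ}
    (hU : U.IsDiag) (i : Fin n → Fin 2) : sigma3Str n i * U = U * sigma3Str n i := by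
  rw [sigma3Str_eq_diagonal, ← hU.diagonal_diag]
  exact commute_diagonal _ _

lemma sigma1At_mulVec_sigma3Str_mulVec_plusN (k : Fin n) (i : Fin n → Fin 2) :
    sigma1At n k *ᵥ (sigma3Str n i *ᵥ plusN n) =
      (-1 : ℂ) ^ (i k : ℕ) • (sigma3Str n i *ᵥ plusN n) := by
  rw [sigma1At_eq_permMatrix, permMatrix_mulVec, sigma3Str_eq_diagonal]
  ext x
  simp only [Function.comp_apply, mulVec_diagonal, Pi.smul_apply, smul_eq_mul, bitFlip,
    Equiv.coe_addRight, walsh_add_single, plusN, mul_assoc]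

lemma star_plusN_dotProduct_plusN : star (plusN n) ⬝ᵥ plusN n = 1 := by
  have hsqrt : ((Real.sqrt 2 : ℂ) ^ n) * (Real.sqrt 2 : ℂ) ^ n = 2 ^ n := by
    rw [← mul_pow, ← Complex.ofReal_mul, Real.mul_self_sqrt zero_le_two, Complex.ofReal_ofNat]
  simp [plusN, dotProduct, Finset.card_univ, ← mul_inv, hsqrt]

lemma neg_one_pow_fin_two_injective : Function.Injective fun a : Fin 2 => (-1 : ℂ) ^ (a : ℕ) := by
  intro a b
  fin_cases a <;> fin_cases b <;> norm_num

end LMEState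

open LMEState in
/-- For an LME state `|Ψ⟩ = U|+⟩^{⊗n}` with `U` diagonal unitary, the generalized
stabilizer operators `S_k = U σ₁^{(k)} U†` are Hermitian, unitary, pairwise commuting and
satisfy `S_k σ₃^{i}|Ψ⟩ = (-1)^{i_k} σ₃^{i}|Ψ⟩`; the states `σ₃^{i}|Ψ⟩` form an
orthonormal basis of `(ℂ²)^{⊗n}`. -/
theorem generalized_stabilizer_of_LME_state (n : ℕ)
    (U : Matrix (Fin n → Fin 2) (Fin n → Fin 2) ℂ)
    (hdiag : U.IsDiag) (hU : U ∈ Matrix.unitaryGroup (Fin n → Fin 2) ℂ) :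
    (∀ k, (U * sigma1At n k * Uᴴ)ᴴ = U * sigma1At n k * Uᴴ) ∧
    (∀ k, U * sigma1At n k * Uᴴ ∈ Matrix.unitaryGroup (Fin n → Fin 2) ℂ) ∧
    (∀ k k', (U * sigma1At n k * Uᴴ) * (U * sigma1At n k' * Uᴴ) =
      (U * sigma1At n k' * Uᴴ) * (U * sigma1At n k * Uᴴ)) ∧
    (∀ (k : Fin n) (i : Fin n → Fin 2),
      (U * sigma1At n k * Uᴴ).mulVec ((sigma3Str n i).mulVec (U.mulVec (plusN n))) =
        ((-1 : ℂ) ^ (i k : ℕ)) • (sigma3Str n i).mulVec (U.mulVec (plusN n))) ∧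
    Orthonormal ℂ
      (fun i : Fin n → Fin 2 =>
        (WithLp.equiv 2 ((Fin n → Fin 2) → ℂ)).symm ((sigma3Str n i).mulVec (U.mulVec (plusN n)))) ∧
    Submodule.span ℂ
        (Set.range fun i : Fin n → Fin 2 =>
          (WithLp.equiv 2 ((Fin n → Fin 2) → ℂ)).symm ((sigma3Str n i).mulVec (U.mulVec (plusN n)))) = ⊤ := by
  have hUU : Uᴴ * U = 1 := mem_unitaryGroup_iff'.mp hU
  have hcomm : ∀ i, sigma3Str n i *ᵥ (U *ᵥ plusN n) = U *ᵥ (sigma3Str n i *ᵥ plusN n) := by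
    intro i
    rw [mulVec_mulVec, mulVec_mulVec, sigma3Str_mul_comm_of_isDiag hdiag]
  have hherm : ∀ k, (U * sigma1At n k * Uᴴ).IsHermitian := fun k =>
    isHermitian_mul_mul_conjTranspose U (sigma1At_isHermitian k)
  have heigen : ∀ (k : Fin n) (i : Fin n → Fin 2),
      (U * sigma1At n k * Uᴴ) *ᵥ (sigma3Str n i *ᵥ (U *ᵥ plusN n)) =
        (-1 : ℂ) ^ (i k : ℕ) • (sigma3Str n i *ᵥ (U *ᵥ plusN n)) := by
    intro k i
    rw [hcomm]
    exact mul_mul_conjTranspose_mulVec_mulVec hUU (sigma1At_mulVec_sigma3Str_mulVec_plusN k i)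
  have hnorm : ∀ i,
      star (sigma3Str n i *ᵥ (U *ᵥ plusN n)) ⬝ᵥ (sigma3Str n i *ᵥ (U *ᵥ plusN n)) = 1 := by
    intro i
    rw [star_mulVec_dotProduct_mulVec (mem_unitaryGroup_iff'.mp (sigma3Str_mem_unitaryGroup i)),
      star_mulVec_dotProduct_mulVec hUU, star_plusN_dotProduct_plusN]
  have horth := orthonormal_of_isHermitian_of_mulVec_eq_smul hherm (by simp)
    (fun i j hij => (Function.ne_iff.mp hij).imp fun k => neg_one_pow_fin_two_injective.ne)
    heigen hnorm
  refine ⟨hherm, fun k => mul_mem (mul_mem hU (sigma1At_mem_unitaryGroup k)) (Unitary.star_mem hU),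
    fun k k' => ?_, heigen, horth, horth.linearIndependent.span_eq_top_of_card_eq_finrank (by simp)⟩
  rw [mul_mul_conjTranspose_mul_mul_mul_conjTranspose hUU,
    mul_mul_conjTranspose_mul_mul_mul_conjTranspose hUU, sigma1At_mul_comm]

end
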